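/- In a DAG-Markov joint distribution, any node is conditionally independent of the set of its non-descendants given its parents: for each i, X^i ⫫ ND(X^i) \ Pa(X^i) | Pa(X^i), where ND(X^i) denotes the non-descendants of X^i. Conversely, if a joint pmf over finitely many variables satisfies this local Markov property with respect to a DAG, then it factorizes as the product of the conditionals P(X^i | Pa(X^i)). -/
import Mathlib

set_option linter.unusedSectionVars false
set_option maxHeartbeats 1000000

attribute [local instance] Classical.propDecidable

/-- Probability of an event under a pmf `μ` on a finite space. -/
noncomputable def prob {Ω : Type} [Fintype Ω] (μ : Ω → ℝ) (E : Set Ω) : ℝ :=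
  ∑ x, if x ∈ E then μ x else 0

/-- Conditional probability `P(A | B)` under `μ`. -/
noncomputable def condProb {Ω : Type} [Fintype Ω] (μ : Ω → ℝ) (A B : Set Ω) : ℝ :=
  prob μ (A ∩ B) / prob μ B

/-- The event that an assignment agrees with `x` on every coordinate in `S`. -/
def agreeOn {ι : Type} {α : ι → Type} (S : Set ι) (x : ∀ i, α i) : Set (∀ i, α i) :=
  {ω | ∀ i ∈ S, ω i = x i}

/-- Conditional independence of the variable sets `A` and `B` given `C`, under `μ`. -/
def CondIndepSets {ι : Type} [Fintype ι] [DecidableEq ι] {α : ι → Type} [∀ i, Fintype (α i)]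
    (μ : (∀ i, α i) → ℝ) (A B C : Set ι) : Prop :=
  ∀ x : ∀ i, α i,
    prob μ (agreeOn (A ∪ B ∪ C) x) * prob μ (agreeOn C x)
      = prob μ (agreeOn (A ∪ C) x) * prob μ (agreeOn (B ∪ C) x)

section Helpers
variable {ι : Type} [Fintype ι] [DecidableEq ι] {α : ι → Type} [∀ i, Fintype (α i)]
variable (μ : (∀ i, α i) → ℝ)

lemma prob_agree_pos (hpos : ∀ x, 0 < μ x) (S : Set ι) (x : ∀ i, α i) :
    0 < prob μ (agreeOn S x) := by
  apply Finset.sum_pos'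
  · intro ω _; split <;> [exact (hpos ω).le; rfl]
  · exact ⟨x, Finset.mem_univ x, by simp [agreeOn, hpos x]⟩

lemma agreeOn_congr {S : Set ι} {x y : ∀ i, α i} (h : ∀ j ∈ S, x j = y j) :
    agreeOn S x = agreeOn S y := by
  ext ω; constructor <;> intro hω j hj
  · rw [← h j hj]; exact hω j hj
  · rw [h j hj]; exact hω j hj

lemma prob_agree_univ (x : ∀ i, α i) : prob μ (agreeOn Set.univ x) = μ x := by
  have : agreeOn (Set.univ : Set ι) x = {x} := by
    ext ω
    simp only [agreeOn, Set.mem_setOf_eq, Set.mem_univ, forall_true_left, Set.mem_singleton_iff]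
    exact ⟨fun h => funext h, fun h j => by rw [h]⟩
  rw [this]
  simp only [prob, Set.mem_singleton_iff]
  rw [Finset.sum_ite_eq' Finset.univ x μ]
  simp

lemma prob_agree_empty (hsum : ∑ x, μ x = 1) (x : ∀ i, α i) :
    prob μ (agreeOn (∅ : Set ι) x) = 1 := by
  have : agreeOn (∅ : Set ι) x = Set.univ := by
    ext ω; simp [agreeOn]
  rw [this]
  simp only [prob, Set.mem_univ, if_true]
  exact hsum

/-- single-coordinate sum-out -/
lemma sum_out_one (S : Set ι) (k : ι) (hk : k ∉ S) (x : ∀ i, α i) :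
    prob μ (agreeOn S x)
      = ∑ v : α k, prob μ (agreeOn (insert k S) (Function.update x k v)) := by
  unfold prob
  rw [Finset.sum_comm]
  apply Finset.sum_congr rfl
  intro ω _
  have key : ∀ v : α k,
      (ω ∈ agreeOn (insert k S) (Function.update x k v)) ↔ (ω ∈ agreeOn S x ∧ ω k = v) := by
    intro v
    constructor
    · intro h
      refine ⟨fun j hj => ?_, ?_⟩
      · have := h j (Set.mem_insert_of_mem _ hj)
        rwa [Function.update_of_ne (fun he => hk (by rwa [he] at hj)) v x] at this
      · have := h k (Set.mem_insert _ _)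
        rwa [Function.update_self] at this
    · rintro ⟨h1, h2⟩ j hj
      rcases Set.mem_insert_iff.1 hj with rfl | hj
      · rw [Function.update_self]; exact h2
      · rw [Function.update_of_ne (fun he => hk (by rwa [he] at hj)) v x]; exact h1 j hj
  calc (if ω ∈ agreeOn S x then μ ω else 0)
      = ∑ v : α k, if v = ω k then (if ω ∈ agreeOn S x then μ ω else 0) else 0 := by
        rw [Finset.sum_ite_eq' Finset.univ (ω k)
          (fun _ => if ω ∈ agreeOn S x then μ ω else 0)]
        simp
    _ = ∑ v : α k, if ω ∈ agreeOn (insert k S) (Function.update x k v) then μ ω else 0 := by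
        apply Finset.sum_congr rfl
        intro v _
        by_cases h2 : v = ω k
        · subst h2; simp [key, eq_comm]
        · rw [if_neg h2, if_neg (by rw [key]; exact fun h => h2 h.2.symm)]

/-- Override `x` on coordinates in `U` by `y`. -/
noncomputable def override (x : ∀ j, α j) (U : Set ι) (y : ∀ j : U, α j) : ∀ j, α j :=
  fun j => if h : j ∈ U then y ⟨j, h⟩ else x j

lemma override_mem {x : ∀ j, α j} {U : Set ι} {y : ∀ j : U, α j} {j : ι} (h : j ∈ U) :
    override x U y j = y ⟨j, h⟩ := dif_pos h

lemma override_notMem {x : ∀ j, α j} {U : Set ι} {y : ∀ j : U, α j} {j : ι} (h : j ∉ U) :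
    override x U y j = x j := dif_neg h

/-- Marginalization: summing the probability of agreement on `S ∪ U` over all
assignments to `U` gives the probability of agreement on `S`. -/
lemma sum_out (S U : Set ι) (hd : Disjoint S U) (x : ∀ i, α i) :
    prob μ (agreeOn S x)
      = ∑ y : (∀ j : U, α j), prob μ (agreeOn (S ∪ U) (override x U y)) := by
  unfold prob
  rw [Finset.sum_comm]
  apply Finset.sum_congr rfl
  intro ω _
  have key : ∀ y : (∀ j : U, α j),
      (ω ∈ agreeOn (S ∪ U) (override x U y)) ↔ (ω ∈ agreeOn S x ∧ (fun j : U => ω j) = y) := by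
    intro y
    constructor
    · intro h
      refine ⟨fun j hj => ?_, funext fun j => ?_⟩
      · have := h j (Set.mem_union_left _ hj)
        rwa [override_notMem (Set.disjoint_left.1 hd hj)] at this
      · have := h j (Set.mem_union_right _ j.2)
        rwa [override_mem j.2] at this
    · rintro ⟨h1, h2⟩ j hj
      rcases hj with hj | hj
      · rw [override_notMem (Set.disjoint_left.1 hd hj)]; exact h1 j hj
      · rw [override_mem hj, ← h2]
  calc (if ω ∈ agreeOn S x then μ ω else 0)
      = ∑ y : (∀ j : U, α j),
          if y = (fun j : U => ω j) then (if ω ∈ agreeOn S x then μ ω else 0) else 0 := by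
        rw [Finset.sum_ite_eq' Finset.univ (fun j : U => ω j)
          (fun _ => if ω ∈ agreeOn S x then μ ω else 0)]
        simp
    _ = ∑ y : (∀ j : U, α j),
          if ω ∈ agreeOn (S ∪ U) (override x U y) then μ ω else 0 := by
        apply Finset.sum_congr rfl
        intro y _
        by_cases h2 : y = (fun j : U => ω j)
        · subst h2; simp [key, eq_comm]
        · rw [if_neg h2, if_neg (by rw [key]; exact fun h => h2 h.2.symm)]

variable (pa : ι → Set ι)

/-- The conditional kernel `P(X_j = x_j | X_{pa j} = x_{pa j})`. -/
noncomputable def ker (j : ι) (x : ∀ i, α i) : ℝ :=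
  condProb μ {ω | ω j = x j} (agreeOn (pa j) x)

lemma ker_congr {j : ι} {x y : ∀ i, α i} (h0 : x j = y j) (h1 : ∀ p ∈ pa j, x p = y p) :
    ker μ pa j x = ker μ pa j y := by
  have e1 : {ω : ∀ i, α i | ω j = x j} = {ω | ω j = y j} := by rw [h0]
  have e2 : agreeOn (pa j) x = agreeOn (pa j) y := agreeOn_congr h1
  unfold ker
  rw [e1, e2]

lemma inter_agree (j : ι) (x : ∀ i, α i) :
    {ω : ∀ i, α i | ω j = x j} ∩ agreeOn (pa j) x = agreeOn ({j} ∪ pa j) x := by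
  ext ω
  constructor
  · rintro ⟨h1, h2⟩ p hp
    rcases hp with hp | hp
    · rcases hp; exact h1
    · exact h2 p hp
  · intro h
    exact ⟨h j (Set.mem_union_left _ rfl), fun p hp => h p (Set.mem_union_right _ hp)⟩

lemma ker_eq_div (j : ι) (x : ∀ i, α i) :
    ker μ pa j x = prob μ (agreeOn ({j} ∪ pa j) x) / prob μ (agreeOn (pa j) x) := by
  unfold ker condProb
  rw [inter_agree]

lemma sum_ker (hpos : ∀ x, 0 < μ x) {j : ι} (hj : j ∉ pa j) (x : ∀ i, α i) :
    ∑ v : α j, ker μ pa j (Function.update x j v) = 1 := by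
  have h1 : ∀ v : α j, ker μ pa j (Function.update x j v)
      = prob μ ({ω | ω j = v} ∩ agreeOn (pa j) x) / prob μ (agreeOn (pa j) x) := by
    intro v
    have e2 : agreeOn (pa j) (Function.update x j v) = agreeOn (pa j) x :=
      agreeOn_congr fun p hp => Function.update_of_ne (fun he => hj (by rwa [he] at hp)) v x
    unfold ker condProb
    rw [e2, Function.update_self]
  have h2 : ∑ v : α j, prob μ ({ω | ω j = v} ∩ agreeOn (pa j) x)
      = prob μ (agreeOn (pa j) x) := by
    unfold prob
    rw [Finset.sum_comm]
    apply Finset.sum_congr rfl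
    intro ω _
    have last : (∑ v : α j, if v = ω j then (if ω ∈ agreeOn (pa j) x then μ ω else 0) else 0)
        = if ω ∈ agreeOn (pa j) x then μ ω else 0 := by
      rw [Finset.sum_ite_eq' Finset.univ (ω j)
        (fun _ => if ω ∈ agreeOn (pa j) x then μ ω else 0)]
      simp
    refine Eq.trans (Finset.sum_congr rfl fun v _ => ?_) last
    by_cases h2 : v = ω j
    · subst h2
      rw [if_pos rfl]
      by_cases h3 : ω ∈ agreeOn (pa j) x
      · rw [if_pos h3, if_pos (Set.mem_inter (show ω ∈ {ω' : ∀ i, α i | ω' j = ω j} from rfl) h3)]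
      · rw [if_neg h3, if_neg (fun h => h3 h.2)]
    · rw [if_neg h2, if_neg (fun h => h2 h.1.symm)]
  have step : (∑ v : α j, ker μ pa j (Function.update x j v))
      = (∑ v : α j, prob μ ({ω | ω j = v} ∩ agreeOn (pa j) x)) / prob μ (agreeOn (pa j) x) := by
    rw [Finset.sum_div]
    exact Finset.sum_congr rfl fun v _ => h1 v
  rw [step, h2, div_self (ne_of_gt (prob_agree_pos μ hpos _ x))]

end Helpers
section Main
variable {ι : Type} [Fintype ι] [DecidableEq ι] {α : ι → Type} [∀ i, Fintype (α i)]
variable (μ : (∀ i, α i) → ℝ) (pa : ι → Set ι)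

/-- Ancestor relation. -/
def anc (a b : ι) : Prop := Relation.TransGen (fun a b => a ∈ pa b) a b

lemma anc_trans {a b c : ι} (h1 : anc pa a b) (h2 : anc pa b c) : anc pa a c :=
  Relation.TransGen.trans h1 h2

/-- Marginal over an ancestrally closed set, derived from the factorization. -/
lemma marg_of_fac (hacyc : ∀ i, ¬ anc pa i i) (hpos : ∀ x, 0 < μ x)
    (hfac : ∀ x, μ x = ∏ i, ker μ pa i x) :
    ∀ (n : ℕ) (S : Finset ι), (Finset.univ \ S).card = n →
      (∀ j ∈ S, ∀ p ∈ pa j, p ∈ S) →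
      ∀ x, prob μ (agreeOn (↑S) x) = ∏ j ∈ S, ker μ pa j x := by
  intro n
  induction n with
  | zero =>
    intro S hcard hanc x
    have hU : S = Finset.univ := by
      have h := Finset.sdiff_eq_empty_iff_subset.1 (Finset.card_eq_zero.1 hcard)
      exact Finset.eq_univ_iff_forall.2 fun a => h (Finset.mem_univ a)
    subst hU
    rw [Finset.coe_univ, prob_agree_univ]
    exact hfac x
  | succ n ih =>
    intro S hcard hanc x
    haveI : IsTrans ι (anc pa) := ⟨fun _ _ _ => anc_trans pa⟩
    haveI : IsIrrefl ι (anc pa) := ⟨hacyc⟩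
    have wf := Finite.wellFounded_of_trans_of_irrefl (anc pa)
    obtain ⟨k, hk, hkmin⟩ := wf.has_min {a | a ∈ Finset.univ \ S}
      (by
        obtain ⟨a, ha⟩ := Finset.card_pos.1 (by rw [hcard]; exact n.succ_pos)
        exact ⟨a, ha⟩)
    have hkS : k ∉ S := (Finset.mem_sdiff.1 hk).2
    have hpak : ∀ p ∈ pa k, p ∈ S := by
      intro p hp
      by_contra hpS
      exact hkmin p (Finset.mem_sdiff.2 ⟨Finset.mem_univ p, hpS⟩) (Relation.TransGen.single hp)
    have hcard' : (Finset.univ \ insert k S).card = n := by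
      rw [Finset.sdiff_insert, Finset.card_erase_of_mem hk, hcard]
      rfl
    have hanc' : ∀ j ∈ insert k S, ∀ p ∈ pa j, p ∈ insert k S := by
      intro j hj p hp
      rcases Finset.mem_insert.1 hj with rfl | hj
      · exact Finset.mem_insert_of_mem (hpak p hp)
      · exact Finset.mem_insert_of_mem (hanc j hj p hp)
    have kne : k ∉ pa k := fun h => hacyc k (Relation.TransGen.single h)
    calc prob μ (agreeOn (↑S) x)
        = ∑ v : α k, prob μ (agreeOn (insert k ↑S) (Function.update x k v)) :=
          sum_out_one μ (↑S) k (by simpa using hkS) x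
      _ = ∑ v : α k, ∏ j ∈ insert k S, ker μ pa j (Function.update x k v) := by
          apply Finset.sum_congr rfl; intro v _
          rw [show (insert k (↑S : Set ι)) = ((insert k S : Finset ι) : Set ι) by
            rw [Finset.coe_insert]]
          exact ih (insert k S) hcard' hanc' _
      _ = ∑ v : α k, ker μ pa k (Function.update x k v) * ∏ j ∈ S, ker μ pa j x := by
          apply Finset.sum_congr rfl; intro v _
          rw [Finset.prod_insert hkS]
          congr 1
          apply Finset.prod_congr rfl
          intro j hj
          exact ker_congr μ pa
            (Function.update_of_ne (fun he => hkS (by rwa [he] at hj)) v x)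
            (fun p hp => Function.update_of_ne
              (fun he => hkS (by rw [he] at hp; exact hanc j hj k hp)) v x)
      _ = (∑ v : α k, ker μ pa k (Function.update x k v)) * ∏ j ∈ S, ker μ pa j x := by
          rw [Finset.sum_mul]
      _ = ∏ j ∈ S, ker μ pa j x := by
          rw [sum_ker μ pa hpos kne x, one_mul]

/-- Key step: from the local Markov property, peel one maximal coordinate off. -/
lemma step_CI (hacyc : ∀ i, ¬ anc pa i i) (hpos : ∀ x, 0 < μ x) {k : ι}
    (hCI : CondIndepSets μ {k} ({j | j ≠ k ∧ ¬ anc pa k j} \ pa k) (pa k))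
    (t : Set ι) (hpat : pa k ⊆ t) (ht : ∀ j ∈ t, j ≠ k ∧ ¬ anc pa k j) (x : ∀ i, α i) :
    prob μ (agreeOn ({k} ∪ t) x) = ker μ pa k x * prob μ (agreeOn t x) := by
  set B : Set ι := {j | j ≠ k ∧ ¬ anc pa k j} \ pa k with hB
  set U : Set ι := B \ t with hU
  have hUB : ∀ j ∈ U, (j ≠ k ∧ ¬ anc pa k j) ∧ j ∉ pa k ∧ j ∉ t := by
    intro j hj
    exact ⟨hj.1.1, hj.1.2, hj.2⟩
  have hpaB : ∀ p ∈ pa k, p ≠ k ∧ ¬ anc pa k p := by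
    intro p hp
    refine ⟨fun he => hacyc k (Relation.TransGen.single (he ▸ hp)), fun hr => ?_⟩
    exact hacyc k (Relation.TransGen.tail hr hp)
  have e1 : (({k} : Set ι) ∪ t) ∪ U = (({k} : Set ι) ∪ B) ∪ pa k := by
    ext j
    constructor
    · intro hj
      rcases hj with (hj | hj) | hj
      · exact Or.inl (Or.inl hj)
      · by_cases hp : j ∈ pa k
        · exact Or.inr hp
        · exact Or.inl (Or.inr ⟨ht j hj, hp⟩)
      · exact Or.inl (Or.inr hj.1)
    · intro hj
      rcases hj with (hj | hj) | hj
      · exact Or.inl (Or.inl hj)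
      · by_cases hjt : j ∈ t
        · exact Or.inl (Or.inr hjt)
        · exact Or.inr ⟨hj, hjt⟩
      · exact Or.inl (Or.inr (hpat hj))
  have e2 : t ∪ U = B ∪ pa k := by
    ext j
    constructor
    · intro hj
      rcases hj with hj | hj
      · by_cases hp : j ∈ pa k
        · exact Or.inr hp
        · exact Or.inl ⟨ht j hj, hp⟩
      · exact Or.inl hj.1
    · intro hj
      rcases hj with hj | hj
      · by_cases hjt : j ∈ t
        · exact Or.inl hjt
        · exact Or.inr ⟨hj, hjt⟩
      · exact Or.inl (hpat hj)
  have d1 : Disjoint (({k} : Set ι) ∪ t) U := by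
    rw [Set.disjoint_left]
    intro j hj hjU
    rcases hj with hj | hj
    · exact (hUB j hjU).1.1 hj
    · exact (hUB j hjU).2.2 hj
  have d2 : Disjoint t U := by
    rw [Set.disjoint_left]
    intro j hj hjU
    exact (hUB j hjU).2.2 hj
  have m3 : ∀ y : (∀ j : U, α j),
      prob μ (agreeOn (pa k) (override x U y)) = prob μ (agreeOn (pa k) x) := by
    intro y
    refine congrArg _ (agreeOn_congr fun p hp => ?_)
    exact override_notMem (fun hpU => (hUB p hpU).2.1 hp)
  have m4 : ∀ y : (∀ j : U, α j),
      prob μ (agreeOn (({k} : Set ι) ∪ pa k) (override x U y))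
        = prob μ (agreeOn (({k} : Set ι) ∪ pa k) x) := by
    intro y
    refine congrArg _ (agreeOn_congr fun p hp => ?_)
    rcases hp with hp | hp
    · exact override_notMem (fun hpU => (hUB p hpU).1.1 hp)
    · exact override_notMem (fun hpU => (hUB p hpU).2.1 hp)
  have key : prob μ (agreeOn (({k} : Set ι) ∪ t) x) * prob μ (agreeOn (pa k) x)
      = prob μ (agreeOn (({k} : Set ι) ∪ pa k) x) * prob μ (agreeOn t x) := by
    rw [sum_out μ (({k} : Set ι) ∪ t) U d1 x, sum_out μ t U d2 x,
      Finset.sum_mul, Finset.mul_sum]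
    apply Finset.sum_congr rfl
    intro y _
    rw [show agreeOn ((({k} : Set ι) ∪ t) ∪ U) (override x U y)
        = agreeOn ((({k} : Set ι) ∪ B) ∪ pa k) (override x U y) by rw [e1],
      show agreeOn (t ∪ U) (override x U y) = agreeOn (B ∪ pa k) (override x U y) by rw [e2],
      ← m3 y, ← m4 y]
    exact hCI (override x U y)
  have hp := prob_agree_pos μ hpos (pa k) x
  rw [ker_eq_div, div_mul_eq_mul_div, eq_div_iff (ne_of_gt hp)]
  rw [mul_comm (prob μ (agreeOn (({k} : Set ι) ∪ pa k) x)) (prob μ (agreeOn t x))] at key ⊢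
  exact key

/-- Marginal over an ancestrally closed set, derived from the local Markov property. -/
lemma marg_of_CI (hacyc : ∀ i, ¬ anc pa i i) (hpos : ∀ x, 0 < μ x) (hsum : ∑ x, μ x = 1)
    (hM : ∀ i : ι, CondIndepSets μ {i} ({j | j ≠ i ∧ ¬ anc pa i j} \ pa i) (pa i)) :
    ∀ (n : ℕ) (S : Finset ι), S.card = n →
      (∀ j ∈ S, ∀ p ∈ pa j, p ∈ S) →
      ∀ x, prob μ (agreeOn (↑S) x) = ∏ j ∈ S, ker μ pa j x := by
  intro n
  induction n with
  | zero =>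
    intro S hcard _ x
    have hS : S = ∅ := Finset.card_eq_zero.1 hcard
    subst hS
    rw [Finset.coe_empty, prob_agree_empty μ hsum, Finset.prod_empty]
  | succ n ih =>
    intro S hcard hanc x
    haveI : IsTrans ι (flip (anc pa)) := ⟨fun _ _ _ h1 h2 => anc_trans pa h2 h1⟩
    haveI : IsIrrefl ι (flip (anc pa)) := ⟨hacyc⟩
    have wf := Finite.wellFounded_of_trans_of_irrefl (flip (anc pa))
    obtain ⟨k, hk, hkmax⟩ := wf.has_min {a | a ∈ S}
      (by
        obtain ⟨a, ha⟩ := Finset.card_pos.1 (by rw [hcard]; exact n.succ_pos)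
        exact ⟨a, ha⟩)
    have hkS : k ∈ S := hk
    have hkmax' : ∀ m ∈ S, ¬ anc pa k m := fun m hm => hkmax m hm
    set t : Finset ι := S.erase k with htdef
    have hpat : pa k ⊆ (↑t : Set ι) := by
      intro p hp
      have hpS : p ∈ S := hanc k hkS p hp
      have hpk : p ≠ k := fun he => hacyc k (Relation.TransGen.single (he ▸ hp))
      exact Finset.mem_coe.2 (Finset.mem_erase.2 ⟨hpk, hpS⟩)
    have ht : ∀ j ∈ (↑t : Set ι), j ≠ k ∧ ¬ anc pa k j := by
      intro j hj
      have hj' := Finset.mem_coe.1 hj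
      exact ⟨Finset.ne_of_mem_erase hj', hkmax' j (Finset.mem_of_mem_erase hj')⟩
    have hanct : ∀ j ∈ t, ∀ p ∈ pa j, p ∈ t := by
      intro j hj p hp
      have hjS := Finset.mem_of_mem_erase hj
      have hpS : p ∈ S := hanc j hjS p hp
      have hpk : p ≠ k := by
        intro he
        subst he
        exact hkmax' j hjS (Relation.TransGen.single hp)
      exact Finset.mem_erase.2 ⟨hpk, hpS⟩
    have hcardt : t.card = n := by
      rw [htdef, Finset.card_erase_of_mem hkS, hcard]
      rfl
    have hS : (↑S : Set ι) = ({k} : Set ι) ∪ ↑t := by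
      conv_lhs => rw [← Finset.insert_erase hkS]
      rw [Finset.coe_insert, Set.insert_eq]
    calc prob μ (agreeOn (↑S) x)
        = prob μ (agreeOn (({k} : Set ι) ∪ ↑t) x) := by rw [hS]
      _ = ker μ pa k x * prob μ (agreeOn (↑t) x) :=
          step_CI μ pa hacyc hpos (hM k) (↑t) hpat ht x
      _ = ker μ pa k x * ∏ j ∈ t, ker μ pa j x := by rw [ih t hcardt hanct x]
      _ = ∏ j ∈ S, ker μ pa j x := by
          conv_rhs => rw [← Finset.insert_erase hkS]
          rw [Finset.prod_insert (Finset.notMem_erase k S)]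
end Main
/-- a positive joint pmf over finitely many finitely-valued variables
factorizes as the product of the conditionals `P(X^i | Pa(X^i))` (DAG-Markov) if and only
if it satisfies the local Markov property: every node is conditionally independent of its
non-descendants (minus its parents) given its parents. -/
theorem stmt_6 {ι : Type} [Fintype ι] [DecidableEq ι] {α : ι → Type} [∀ i, Fintype (α i)]
    (pa : ι → Set ι)
    (hacyc : ∀ i, ¬ Relation.TransGen (fun a b => a ∈ pa b) i i)
    (μ : (∀ i, α i) → ℝ)
    (hpos : ∀ x, 0 < μ x) (hsum : ∑ x, μ x = 1) :
    (∀ x : ∀ i, α i, μ x = ∏ i, condProb μ {ω | ω i = x i} (agreeOn (pa i) x))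
      ↔ ∀ i : ι, CondIndepSets μ {i}
          ({j | j ≠ i ∧ ¬ Relation.TransGen (fun a b => a ∈ pa b) i j} \ pa i) (pa i) := by
  have hacyc' : ∀ i, ¬ anc pa i i := hacyc
  constructor
  · intro hfac i x
    have hfac' : ∀ z, μ z = ∏ j, ker μ pa j z := hfac
    show prob μ (agreeOn ((({i} : Set ι) ∪ ({j | j ≠ i ∧ ¬ anc pa i j} \ pa i)) ∪ pa i) x)
          * prob μ (agreeOn (pa i) x)
        = prob μ (agreeOn (({i} : Set ι) ∪ pa i) x)
          * prob μ (agreeOn (({j | j ≠ i ∧ ¬ anc pa i j} \ pa i) ∪ pa i) x)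
    set Nd' : Set ι := {j | j ≠ i ∧ ¬ anc pa i j} with hNd'def
    set Nd : Set ι := {j | ¬ anc pa i j} with hNddef
    set Bs : Set ι := Nd' \ pa i with hBdef
    have hpaNd' : pa i ⊆ Nd' := by
      intro p hp
      refine ⟨fun he => hacyc' i (Relation.TransGen.single (he ▸ hp)), fun hr => ?_⟩
      exact hacyc' i (Relation.TransGen.tail hr hp)
    have e1 : (({i} : Set ι) ∪ Bs) ∪ pa i = Nd := by
      ext j
      constructor
      · intro hj
        rcases hj with (hj | hj) | hj
        · rcases hj; exact hacyc' i
        · exact hj.1.2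
        · exact (hpaNd' hj).2
      · intro hj
        by_cases hji : j = i
        · exact Or.inl (Or.inl hji)
        · by_cases hjp : j ∈ pa i
          · exact Or.inr hjp
          · exact Or.inl (Or.inr ⟨⟨hji, hj⟩, hjp⟩)
    have e2 : Bs ∪ pa i = Nd' := by
      ext j
      constructor
      · intro hj
        rcases hj with hj | hj
        · exact hj.1
        · exact hpaNd' hj
      · intro hj
        by_cases hjp : j ∈ pa i
        · exact Or.inr hjp
        · exact Or.inl ⟨hj, hjp⟩
    have e3 : (({i} : Set ι) ∪ pa i) ∪ Bs = Nd := by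
      rw [← e1]
      ext j
      constructor
      · intro hj
        rcases hj with (hj | hj) | hj
        · exact Or.inl (Or.inl hj)
        · exact Or.inr hj
        · exact Or.inl (Or.inr hj)
      · intro hj
        rcases hj with (hj | hj) | hj
        · exact Or.inl (Or.inl hj)
        · exact Or.inr hj
        · exact Or.inl (Or.inr hj)
    have e4 : pa i ∪ Bs = Nd' := by rw [← e2, Set.union_comm]
    have d3 : Disjoint (({i} : Set ι) ∪ pa i) Bs := by
      rw [Set.disjoint_left]
      intro j hj hjB
      rcases hj with hj | hj
      · exact hjB.1.1 hj
      · exact hjB.2 hj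
    have d4 : Disjoint (pa i) Bs := by
      rw [Set.disjoint_left]
      intro j hj hjB
      exact hjB.2 hj
    have hancF : ∀ j ∈ Nd.toFinset, ∀ p ∈ pa j, p ∈ Nd.toFinset := by
      intro j hj p hp
      rw [Set.mem_toFinset] at hj ⊢
      exact fun hr => hj (Relation.TransGen.tail hr hp)
    have hancF' : ∀ j ∈ Nd'.toFinset, ∀ p ∈ pa j, p ∈ Nd'.toFinset := by
      intro j hj p hp
      rw [Set.mem_toFinset] at hj ⊢
      exact ⟨fun he => hj.2 (Relation.TransGen.single (he ▸ hp)),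
        fun hr => hj.2 (Relation.TransGen.tail hr hp)⟩
    have probNd : ∀ z, prob μ (agreeOn Nd z) = ∏ j ∈ Nd.toFinset, ker μ pa j z := by
      intro z
      conv_lhs => rw [← Set.coe_toFinset Nd]
      exact marg_of_fac μ pa hacyc' hpos hfac' _ Nd.toFinset rfl hancF z
    have probNd' : ∀ z, prob μ (agreeOn Nd' z) = ∏ j ∈ Nd'.toFinset, ker μ pa j z := by
      intro z
      conv_lhs => rw [← Set.coe_toFinset Nd']
      exact marg_of_fac μ pa hacyc' hpos hfac' _ Nd'.toFinset rfl hancF' z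
    have hiF : i ∉ Nd'.toFinset := by
      rw [Set.mem_toFinset]
      exact fun h => h.1 rfl
    have hFins : Nd.toFinset = insert i Nd'.toFinset := by
      ext j
      rw [Finset.mem_insert, Set.mem_toFinset, Set.mem_toFinset]
      constructor
      · intro hj
        by_cases hji : j = i
        · exact Or.inl hji
        · exact Or.inr ⟨hji, hj⟩
      · intro hj
        rcases hj with hj | hj
        · rcases hj; exact hacyc' i
        · exact hj.2
    have prodF : ∀ z, ∏ j ∈ Nd.toFinset, ker μ pa j z
        = ker μ pa i z * ∏ j ∈ Nd'.toFinset, ker μ pa j z := by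
      intro z
      rw [hFins, Finset.prod_insert hiF]
    have kcong : ∀ y : (∀ j : Bs, α j), ker μ pa i (override x Bs y) = ker μ pa i x := by
      intro y
      refine ker_congr μ pa (override_notMem fun h => h.1.1 rfl)
        (fun p hp => override_notMem fun h => h.2 hp)
    have m1 : prob μ (agreeOn (({i} : Set ι) ∪ pa i) x)
        = ker μ pa i x * ∑ y : (∀ j : Bs, α j),
            ∏ j ∈ Nd'.toFinset, ker μ pa j (override x Bs y) := by
      rw [sum_out μ _ Bs d3 x, Finset.mul_sum]
      refine Finset.sum_congr (by congr 1; exact Subsingleton.elim _ _) fun y _ => ?_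
      rw [show agreeOn ((({i} : Set ι) ∪ pa i) ∪ Bs) (override x Bs y)
        = agreeOn Nd (override x Bs y) by rw [e3]]
      rw [probNd _, prodF _, kcong y]
    have m2 : prob μ (agreeOn (pa i) x)
        = ∑ y : (∀ j : Bs, α j), ∏ j ∈ Nd'.toFinset, ker μ pa j (override x Bs y) := by
      rw [sum_out μ _ Bs d4 x]
      refine Finset.sum_congr (by congr 1; exact Subsingleton.elim _ _) fun y _ => ?_
      rw [show agreeOn (pa i ∪ Bs) (override x Bs y)
        = agreeOn Nd' (override x Bs y) by rw [e4]]
      rw [probNd' _]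
    rw [show agreeOn ((({i} : Set ι) ∪ Bs) ∪ pa i) x = agreeOn Nd x by rw [e1],
      show agreeOn (Bs ∪ pa i) x = agreeOn Nd' x by rw [e2],
      probNd x, prodF x, probNd' x, m1, m2]
    ring
  · intro hM x
    have h := marg_of_CI μ pa hacyc' hpos hsum hM Finset.univ.card Finset.univ rfl
      (fun j _ p _ => Finset.mem_univ p) x
    rw [Finset.coe_univ, prob_agree_univ] at h
    exact h
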